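/- arXiv:1508.07660 — 3 statements merged into one kernel-verified Lean document; each statement's English description precedes it below -/
import Mathlib

section
/- Let N ≥ 1 be an integer. There is no proper subgroup S of SL₂(ℤ/Nℤ) such that the subgroup generated by S and -I equals SL₂(ℤ/Nℤ). -/
open scoped Pointwise


/-- For `N ≥ 1`, there is no proper subgroup `S` of `SL₂(ℤ/Nℤ)` such that the subgroup
generated by `S` and `-I` equals `SL₂(ℤ/Nℤ)`. -/
theorem stmt0 (N : ℕ) (hN : 1 ≤ N)
    (negI : Matrix.SpecialLinearGroup (Fin 2) (ZMod N))
    (hnegI : (negI : Matrix (Fin 2) (Fin 2) (ZMod N)) = -1)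
    (S : Subgroup (Matrix.SpecialLinearGroup (Fin 2) (ZMod N)))
    (hS : S ≠ ⊤) :
    S ⊔ Subgroup.closure {negI} ≠ ⊤ := by
  intro h
  -- negI is central
  have hcentral : ∀ g : Matrix.SpecialLinearGroup (Fin 2) (ZMod N), g * negI = negI * g := by
    intro g
    apply Subtype.ext
    simp [Matrix.SpecialLinearGroup.coe_mul, hnegI]
  have hsq : negI * negI = 1 := by
    apply Subtype.ext
    simp [Matrix.SpecialLinearGroup.coe_mul, hnegI]
  -- the element w with w^2 = -1
  have hdet : Matrix.det !![(0 : ZMod N), 1; -1, 0] = 1 := by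
    simp [Matrix.det_fin_two_of]
  set w : Matrix.SpecialLinearGroup (Fin 2) (ZMod N) := ⟨!![(0 : ZMod N), 1; -1, 0], hdet⟩ with hw_def
  have hw2 : w * w = negI := by
    apply Subtype.ext
    show (!![(0 : ZMod N), 1; -1, 0] * !![(0 : ZMod N), 1; -1, 0]) = _
    rw [hnegI]
    ext i j
    fin_cases i <;> fin_cases j <;>
      simp [Matrix.mul_apply, Fin.sum_univ_two, Matrix.one_apply]
  -- closure {negI} is normal (it's central)
  have hcen : negI ∈ Subgroup.center (Matrix.SpecialLinearGroup (Fin 2) (ZMod N)) := by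
    rw [Subgroup.mem_center_iff]
    intro g; exact hcentral g
  have hle : Subgroup.closure {negI} ≤ Subgroup.center (Matrix.SpecialLinearGroup (Fin 2) (ZMod N)) := by
    rw [Subgroup.closure_le]
    intro x hx
    rcases hx with rfl
    exact hcen
  haveI hnorm : (Subgroup.closure {negI}).Normal := by
    constructor
    intro n hn g
    have hc := Subgroup.mem_center_iff.mp (hle hn) g
    have : g * n * g⁻¹ = n := by
      rw [hc, mul_assoc, mul_inv_cancel, mul_one]
    rwa [this]
  -- powers of negI
  have h2n : negI ^ (2 : ℕ) = 1 := by rw [pow_two]; exact hsq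
  have key : ∀ k : ℤ, negI ^ k = 1 ∨ negI ^ k = negI := by
    intro k
    have h2z : negI ^ (2 : ℤ) = 1 := by
      rw [show (2 : ℤ) = ((2 : ℕ) : ℤ) from rfl, zpow_natCast]; exact h2n
    have hk : negI ^ k = negI ^ (k % 2) := by
      conv_lhs => rw [← Int.mul_ediv_add_emod k 2]
      rw [zpow_add, zpow_mul, h2z, one_zpow, one_mul]
    rcases Int.emod_two_eq k with h' | h'
    · left; rw [hk, h', zpow_zero]
    · right; rw [hk, h', zpow_one]
  -- decompose w
  have hw_top : w ∈ S ⊔ Subgroup.closure {negI} := by rw [h]; exact Subgroup.mem_top w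
  have hw_set : w ∈ (S : Set (Matrix.SpecialLinearGroup (Fin 2) (ZMod N))) *
      (Subgroup.closure {negI} : Set (Matrix.SpecialLinearGroup (Fin 2) (ZMod N))) := by
    rw [← Subgroup.mul_normal]; exact hw_top
  obtain ⟨s, hs, n, hn, hsn⟩ := hw_set
  have hsn' : s * n = w := hsn
  obtain ⟨k, hk⟩ := Subgroup.mem_closure_singleton.mp hn
  have hnegI_mem : negI ∈ S := by
    rcases key k with h1 | h1
    · -- n = 1, so w = s
      have hws : w = s := by rw [← hsn', ← hk, h1, mul_one]
      rw [← hw2, hws]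
      exact mul_mem hs hs
    · -- n = negI, so w = s * negI
      have hws : w = s * negI := by rw [← hsn', ← hk, h1]
      have : negI = s * s := by
        have e : s * negI * (s * negI) = s * s * (negI * negI) := by
          rw [mul_assoc s negI (s * negI), ← mul_assoc negI s negI,
            ← hcentral s, mul_assoc s negI negI, ← mul_assoc, ← mul_assoc]
        rw [← hw2, hws, e, hsq, mul_one]
      rw [this]
      exact mul_mem hs hs
  have hcl : Subgroup.closure {negI} ≤ S := by
    rw [Subgroup.closure_le]
    intro x hx; rcases hx with rfl; exact hnegI_mem
  apply hS
  have hsup : S ⊔ Subgroup.closure {negI} ≤ S := sup_le le_rfl hcl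
  exact le_antisymm le_top (h ▸ hsup)
end

section
/- Let ℓ be an odd prime, C a Cartan subgroup of GL₂(𝔽_ℓ) (split or non-split) with normalizer N. If H is a subgroup of N such that the subgroup generated by H and -I equals N, then H = N. -/
/-- A subgroup of `GL₂(𝔽_ℓ)` is a split Cartan subgroup if it consists exactly of the
invertible diagonal matrices. -/
def IsSplitCartanSubgroup (ℓ : ℕ)
    (C : Subgroup (Matrix.GeneralLinearGroup (Fin 2) (ZMod ℓ))) : Prop :=
  ∀ A : Matrix.GeneralLinearGroup (Fin 2) (ZMod ℓ),
    A ∈ C ↔ (A : Matrix (Fin 2) (Fin 2) (ZMod ℓ)) 0 1 = 0 ∧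
      (A : Matrix (Fin 2) (Fin 2) (ZMod ℓ)) 1 0 = 0

/-- A subgroup of `GL₂(𝔽_ℓ)` is a non-split Cartan subgroup (with respect to a fixed
non-square `ε ∈ 𝔽_ℓ`) if it consists exactly of the matrices `[[a, bε], [b, a]]`
(which are invertible as soon as `(a, b) ≠ (0, 0)`). -/
def IsNonsplitCartanSubgroup (ℓ : ℕ) (ε : ZMod ℓ)
    (C : Subgroup (Matrix.GeneralLinearGroup (Fin 2) (ZMod ℓ))) : Prop :=
  ∀ A : Matrix.GeneralLinearGroup (Fin 2) (ZMod ℓ),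
    A ∈ C ↔ ∃ a b : ZMod ℓ, (A : Matrix (Fin 2) (Fin 2) (ZMod ℓ)) = !![a, b * ε; b, a]

/-- A Cartan subgroup of `GL₂(𝔽_ℓ)` is a subgroup conjugate to the split Cartan subgroup
or to a non-split Cartan subgroup. -/
def IsCartanSubgroup (ℓ : ℕ)
    (C : Subgroup (Matrix.GeneralLinearGroup (Fin 2) (ZMod ℓ))) : Prop :=
  ∃ g : Matrix.GeneralLinearGroup (Fin 2) (ZMod ℓ),
    IsSplitCartanSubgroup ℓ (C.map (MulAut.conj g).toMonoidHom) ∨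
      ∃ ε : ZMod ℓ, ¬ IsSquare ε ∧
        IsNonsplitCartanSubgroup ℓ ε (C.map (MulAut.conj g).toMonoidHom)

open Pointwise in
/-- Key reduction: if some element of `N` squares to the central involution `z`, then
`H ⊔ ⟨z⟩ = N` forces `H = N`. -/
theorem stmt2_key_red {G : Type*} [Group G] (H N : Subgroup G) (z : G)
    (hz : z ∈ Subgroup.center G)
    (hz1 : z ^ 2 = 1)
    (hgen : H ⊔ Subgroup.closure {z} = N)
    (x : G) (hxN : x ∈ N) (hx2 : x ^ 2 = z) : H = N := by
  have hK : Subgroup.closure {z} ≤ Subgroup.center G :=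
    (Subgroup.closure_le _).mpr (Set.singleton_subset_iff.mpr hz)
  haveI hKnormal : (Subgroup.closure {z}).Normal := by
    constructor
    intro n hn g
    have hc := Subgroup.mem_center_iff.mp (hK hn) g
    have : g * n * g⁻¹ = n := by rw [hc]; group
    rwa [this]
  have hxm : x ∈ (H : Set G) * (Subgroup.closure {z} : Set G) := by
    rw [← Subgroup.mul_normal, hgen]
    exact hxN
  obtain ⟨h, hh, k, hk, hx⟩ := hxm
  have hx' : h * k = x := hx
  have hk2 : k ^ 2 = 1 := by
    rw [SetLike.mem_coe, ← Subgroup.zpowers_eq_closure] at hk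
    obtain ⟨n, rfl⟩ := hk
    calc (z ^ n) ^ 2 = (z ^ (2 : ℕ)) ^ n := by
          rw [← zpow_natCast (z ^ n) 2, ← zpow_mul, mul_comm, zpow_mul, zpow_natCast]
    _ = 1 := by rw [hz1, one_zpow]
  have hkc : Commute h k := Subgroup.mem_center_iff.mp (hK hk) h
  have hzH : z ∈ H := by
    have e := hkc.mul_pow 2
    rw [hx', hx2, hk2, mul_one] at e
    rw [e]
    exact pow_mem hh 2
  rw [← hgen]
  exact (sup_eq_left.mpr ((Subgroup.closure_le _).mpr
    (Set.singleton_subset_iff.mpr hzH))).symm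

/-- In `𝔽_ℓ` with `ℓ` an odd prime, the product of the inverse of a nonsquare with `-1`
is a square when `-1` is not a square. -/
theorem stmt2_nonsq_aux (ℓ : ℕ) [Fact (Nat.Prime ℓ)] (ε : ZMod ℓ)
    (hε : ¬ IsSquare ε) (h1 : ¬ IsSquare (-1 : ZMod ℓ)) :
    IsSquare (-ε⁻¹ : ZMod ℓ) := by
  have hε0 : ε ≠ 0 := fun h => hε (h ▸ ⟨0, by simp⟩)
  have hχε : quadraticChar (ZMod ℓ) ε = -1 := quadraticChar_neg_one_iff_not_isSquare.mpr hε
  have hχ1 : quadraticChar (ZMod ℓ) (-1) = -1 := quadraticChar_neg_one_iff_not_isSquare.mpr h1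
  have hinv : quadraticChar (ZMod ℓ) ε⁻¹ = -1 := by
    have := _root_.map_mul (quadraticChar (ZMod ℓ)) ε ε⁻¹
    rw [mul_inv_cancel₀ hε0, _root_.map_one, hχε] at this
    linarith [this]
  have : quadraticChar (ZMod ℓ) (-ε⁻¹) = 1 := by
    rw [show (-ε⁻¹ : ZMod ℓ) = -1 * ε⁻¹ by ring, _root_.map_mul, hχ1, hinv]; ring
  exact (quadraticChar_one_iff_isSquare (by simp [hε0])).mp this

/-- Let `ℓ` be an odd prime two and `C` a (split or non-split) Cartan subgroup of
`GL₂(𝔽_ℓ)`, with normalizer `N`.  If `H` is a subgroup of `N` such that the subgroup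
generated by `H` and `-I` is `N`, then `H = N`. -/
theorem stmt2 (ℓ : ℕ) (hℓ : Nat.Prime ℓ) (hodd : ℓ ≠ 2)
    (C : Subgroup (Matrix.GeneralLinearGroup (Fin 2) (ZMod ℓ)))
    (hC : IsCartanSubgroup ℓ C)
    (H : Subgroup (Matrix.GeneralLinearGroup (Fin 2) (ZMod ℓ)))
    (hHN : H ≤ Subgroup.normalizer (C : Set (Matrix.GeneralLinearGroup (Fin 2) (ZMod ℓ))))
    (hgen : H ⊔ Subgroup.closure {(-1 : Matrix.GeneralLinearGroup (Fin 2) (ZMod ℓ))}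
      = Subgroup.normalizer (C : Set (Matrix.GeneralLinearGroup (Fin 2) (ZMod ℓ)))) :
    H = Subgroup.normalizer (C : Set (Matrix.GeneralLinearGroup (Fin 2) (ZMod ℓ))) := by
  haveI : Fact (Nat.Prime ℓ) := ⟨hℓ⟩
  set G := Matrix.GeneralLinearGroup (Fin 2) (ZMod ℓ) with hG
  have hcen : (-1 : G) ∈ Subgroup.center G := by
    rw [Subgroup.mem_center_iff]
    intro g
    rw [mul_neg_one, neg_one_mul]
  have hsq : ((-1 : G)) ^ 2 = 1 := by rw [neg_one_sq]
  obtain ⟨g, hcase⟩ := hC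
  -- reduce to finding a square root of -1 in the normalizer of the conjugated group
  suffices hx : ∃ x' : G, x' ∈ Subgroup.normalizer ((C.map (MulAut.conj g).toMonoidHom : Subgroup G) : Set G) ∧
      x' ^ 2 = -1 by
    obtain ⟨x', hx'N, hx'2⟩ := hx
    rw [← Subgroup.map_equiv_normalizer_eq C (MulAut.conj g)] at hx'N
    obtain ⟨y, hyN, hy⟩ := hx'N
    refine stmt2_key_red H _ (-1) hcen hsq hgen y hyN ?_
    refine (MulAut.conj g).injective ?_
    have hy' : (MulAut.conj g) y = x' := hy
    rw [map_pow, hy', hx'2]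
    simp
  rcases hcase with hsplit | ⟨ε, hε, hns⟩
  · -- split case : x' = [[0,1],[-1,0]]
    have p1 : !![(0:ZMod ℓ),1;-1,0] * !![0,-1;1,0] = 1 := by
      rw [Matrix.one_fin_two]; norm_num [Matrix.mul_fin_two]
    have p2 : !![(0:ZMod ℓ),-1;1,0] * !![0,1;-1,0] = 1 := by
      rw [Matrix.one_fin_two]; norm_num [Matrix.mul_fin_two]
    refine ⟨⟨!![(0:ZMod ℓ),1;-1,0], !![0,-1;1,0], p1, p2⟩, ?_, ?_⟩
    · rw [Subgroup.mem_normalizer_iff]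
      intro A
      rw [hsplit A, hsplit]
      have hcoe : ((⟨!![(0:ZMod ℓ),1;-1,0], !![0,-1;1,0], p1, p2⟩ * A *
          (⟨!![(0:ZMod ℓ),1;-1,0], !![0,-1;1,0], p1, p2⟩ : G)⁻¹ : G) :
          Matrix (Fin 2) (Fin 2) (ZMod ℓ))
          = !![(0:ZMod ℓ),1;-1,0] * (A : Matrix (Fin 2) (Fin 2) (ZMod ℓ)) *
            !![0,-1;1,0] := rfl
      rw [hcoe]
      constructor
      · rintro ⟨h1, h2⟩
        constructor <;>
          simp [Matrix.mul_apply, Matrix.vecMul, dotProduct, Fin.sum_univ_two,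
            h1, h2]
      · rintro ⟨h1, h2⟩
        simp only [Matrix.mul_apply, Matrix.vecMul, dotProduct,
          Fin.sum_univ_two] at h1 h2
        constructor
        · simpa using h2
        · simpa using h1
    · ext : 1
      rw [Units.val_pow_eq_pow_val, pow_two]
      show !![(0:ZMod ℓ),1;-1,0] * !![(0:ZMod ℓ),1;-1,0] = _
      rw [Units.val_neg, Units.val_one, Matrix.one_fin_two]
      norm_num [Matrix.mul_fin_two]
  · -- nonsplit case
    by_cases h1 : IsSquare (-1 : ZMod ℓ)
    · obtain ⟨c, hc⟩ := h1
      have p1 : !![(c:ZMod ℓ),0;0,c] * !![-c,0;0,-c] = 1 := by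
        ext i j
        fin_cases i <;> fin_cases j <;>
          simp [Matrix.mul_apply, Fin.sum_univ_two] <;> first
          | linear_combination hc
          | linear_combination -hc
      have p2 : !![(-c:ZMod ℓ),0;0,-c] * !![c,0;0,c] = 1 := by
        ext i j
        fin_cases i <;> fin_cases j <;>
          simp [Matrix.mul_apply, Fin.sum_univ_two] <;> first
          | linear_combination hc
          | linear_combination -hc
      refine ⟨⟨!![(c:ZMod ℓ),0;0,c], !![-c,0;0,-c], p1, p2⟩, ?_, ?_⟩
      · apply Subgroup.le_normalizer
        rw [hns]
        exact ⟨c, 0, by norm_num⟩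
      · ext : 1
        rw [Units.val_pow_eq_pow_val, pow_two]
        show !![(c:ZMod ℓ),0;0,c] * !![(c:ZMod ℓ),0;0,c] = _
        rw [Units.val_neg, Units.val_one]
        ext i j
        fin_cases i <;> fin_cases j <;>
          simp [Matrix.mul_apply, Fin.sum_univ_two] <;> first
          | linear_combination hc
          | linear_combination -hc
    · obtain ⟨b, hb⟩ := stmt2_nonsq_aux ℓ ε hε h1
      have hε0 : ε ≠ 0 := fun h => hε (h ▸ ⟨0, by simp⟩)
      have hbb : b * b * ε = -1 := by
        rw [← hb]
        field_simp
      have p1 : !![(0:ZMod ℓ),b*ε;b,0] * !![0,-(b*ε);-b,0] = 1 := by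
        ext i j
        fin_cases i <;> fin_cases j <;>
          simp [Matrix.mul_apply, Fin.sum_univ_two] <;> first
          | linear_combination hbb
          | linear_combination -hbb
      have p2 : !![(0:ZMod ℓ),-(b*ε);-b,0] * !![0,b*ε;b,0] = 1 := by
        ext i j
        fin_cases i <;> fin_cases j <;>
          simp [Matrix.mul_apply, Fin.sum_univ_two] <;> first
          | linear_combination hbb
          | linear_combination -hbb
      refine ⟨⟨!![(0:ZMod ℓ),b*ε;b,0], !![0,-(b*ε);-b,0], p1, p2⟩, ?_, ?_⟩
      · apply Subgroup.le_normalizer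
        rw [hns]
        exact ⟨0, b, rfl⟩
      · ext : 1
        rw [Units.val_pow_eq_pow_val, pow_two]
        show !![(0:ZMod ℓ),b*ε;b,0] * !![(0:ZMod ℓ),b*ε;b,0] = _
        rw [Units.val_neg, Units.val_one]
        ext i j
        fin_cases i <;> fin_cases j <;>
          simp [Matrix.mul_apply, Fin.sum_univ_two] <;> first
          | linear_combination hbb
          | linear_combination -hbb
end

section
/- For every rational u with u(u+1) ≠ 0 such that the curve is nonsingular, the point (3(u+1)², 4u(u+1)²) is a point of order exactly 3 on the elliptic curve over ℚ defined by y² = x³ − 3(u+1)³(u+9)x − 2(u+1)⁴(u²−18u−27). -/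
open WeierstrassCurve.Affine WeierstrassCurve.Affine.Point in
/-- For every rational `u` with `u(u+1) ≠ 0` such that the curve
`y² = x³ − 3(u+1)³(u+9)x − 2(u+1)⁴(u²−18u−27)` is nonsingular, the point
`(3(u+1)², 4u(u+1)²)` is a point of order exactly `3` on that elliptic curve. -/
theorem stmt13 (u : ℚ) (hu : u * (u + 1) ≠ 0)
    (W : WeierstrassCurve ℚ)
    (hW : W = ⟨0, 0, 0, -3 * (u + 1) ^ 3 * (u + 9),
      -2 * (u + 1) ^ 4 * (u ^ 2 - 18 * u - 27)⟩)
    (hΔ : W.Δ ≠ 0)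
    (P : W.toAffine.Point)
    (hP : ∃ h : W.toAffine.Nonsingular (3 * (u + 1) ^ 2) (4 * u * (u + 1) ^ 2),
      P = WeierstrassCurve.Affine.Point.some _ _ h) :
    addOrderOf P = 3 := by
  obtain ⟨h, rfl⟩ := hP
  set x : ℚ := 3 * (u + 1) ^ 2 with hx
  set y : ℚ := 4 * u * (u + 1) ^ 2 with hy
  have hu0 : u ≠ 0 := fun h0 => hu (by simp [h0])
  have hu1 : (u + 1) ≠ 0 := fun h1 => hu (by simp [h1])
  have hy0 : y ≠ 0 := by
    simp only [hy]
    positivity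
  have hyne : y ≠ W.toAffine.negY x y := by
    subst hW
    simp only [negY]
    intro hcon
    apply hy0
    linarith
  have hslope : W.toAffine.slope x x y y = 3 * (u + 1) := by
    rw [slope_of_Y_ne rfl hyne]
    subst hW
    simp only [negY, hx, hy]
    rw [div_eq_iff (by intro h0; apply hy0; linarith)]
    ring
  have hX : W.toAffine.addX x x (W.toAffine.slope x x y y) = x := by
    rw [hslope]
    subst hW
    simp only [addX, hx]
    ring
  have hY : W.toAffine.addY x x y (W.toAffine.slope x x y y) = W.toAffine.negY x y := by
    rw [addY, negAddY, hX, hslope]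
    subst hW
    simp only [negY, negAddY, hx, hy]
    ring
  have h3 : some _ _ h + some _ _ h + some _ _ h = 0 := by
    rw [add_self_of_Y_ne hyne]
    exact add_of_Y_eq hX hY
  haveI : Fact (Nat.Prime 3) := ⟨by norm_num⟩
  apply addOrderOf_eq_prime
  · show (3 : ℕ) • some _ _ h = 0
    rw [show (3 : ℕ) = 2 + 1 by rfl, add_nsmul, two_nsmul, one_nsmul]
    exact h3
  · exact fun hc => by simp at hc
end
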